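/- For a finite subset E of K, the integral closure of Int(E, D) = {f ∈ K[X] : f(E) ⊆ D} is Int(E, D') = {f ∈ K[X] : f(E) ⊆ D'}, where D' is the integral closure of D in K. -/

import Mathlib

/-!
Evaluation at `a ∈ E` maps `Int(E, D)` into `D`, so it carries an integral dependence relation
of `f` over `Int(E, D)` to one of `f(a)` over `D`. Conversely, if every `f(a)`, `a ∈ E`, is integral
over `D`, the product of their (finitely many) monic equations, times `X`, is a monic `q ∈ D[X]` of
positive degree killing all of them; then `c = q(f)` vanishes on `E`, hence lies in `Int(E, D)`, and
`f` is a root of `q - c`, which is still monic over `Int(E, D)` because `deg q > 0`.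
-/

open Polynomial

variable (D : Type*) [CommRing D] [IsDomain D]

noncomputable abbrev K := FractionRing D

/-- The ring `Int(E, D) = {f ∈ K[X] : f(E) ⊆ D}` of polynomials that are
integer-valued on a subset `E ⊆ K`, as a subring of `K[X]`. -/
noncomputable def IntSub (E : Set (K D)) : Subring (Polynomial (K D)) where
  carrier := {f | ∀ a ∈ E, ∃ d : D, f.eval a = algebraMap D (K D) d}
  zero_mem' := fun a _ => ⟨0, by simp⟩
  one_mem' := fun a _ => ⟨1, by simp⟩
  add_mem' := by
    intro f g hf hg a ha
    obtain ⟨d1, h1⟩ := hf a ha; obtain ⟨d2, h2⟩ := hg a ha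
    exact ⟨d1 + d2, by simp [h1, h2]⟩
  mul_mem' := by
    intro f g hf hg a ha
    obtain ⟨d1, h1⟩ := hf a ha; obtain ⟨d2, h2⟩ := hg a ha
    exact ⟨d1 * d2, by simp [h1, h2]⟩
  neg_mem' := by
    intro f hf a ha
    obtain ⟨d, h⟩ := hf a ha
    exact ⟨-d, by simp [h]⟩

theorem IsIntegral.map_of_map_mem_range {R S T U : Type*} [CommRing R] [Ring S] [CommRing T]
    [Ring U] [Algebra R S] [Algebra T U] (ψ : S →+* U) (hT : Function.Injective (algebraMap T U))
    (h : ∀ r : R, ψ (algebraMap R S r) ∈ (algebraMap T U).range) {a : S} (ha : IsIntegral R a) :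
    IsIntegral T (ψ a) := by
  let e := RingEquiv.ofLeftInverse (Function.leftInverse_invFun hT)
  refine ha.map_of_comp_eq (e.symm.toRingHom.comp ((ψ.comp (algebraMap R S)).codRestrict _ h)) ψ
    (RingHom.ext fun r => ?_)
  exact congrArg Subtype.val (e.apply_symm_apply _)

theorem Set.Finite.exists_monic_forall_aeval_eq_zero {R A : Type*} [CommRing R] [Nontrivial R]
    [Ring A] [Algebra R A] {s : Set A} (hs : s.Finite) (h : ∀ x ∈ s, IsIntegral R x) :
    ∃ p : R[X], p.Monic ∧ 0 < p.natDegree ∧ ∀ x ∈ s, aeval x p = 0 := by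
  induction s, hs using Set.Finite.induction_on with
  | empty => exact ⟨X, monic_X, by simp, by simp⟩
  | @insert a s _ _ ih =>
    obtain ⟨p, hp, hpdeg, hps⟩ := ih fun x hx => h x (mem_insert_of_mem a hx)
    obtain ⟨q, hq, hqa⟩ := h a (mem_insert a s)
    refine ⟨q * p, hq.mul hp, hpdeg.trans_le (hq.natDegree_mul hp ▸ Nat.le_add_left _ _), ?_⟩
    rintro x (rfl | hx)
    · rw [map_mul, aeval_def, hqa, zero_mul]
    · rw [map_mul, hps x hx, mul_zero]

theorem IsIntegral.of_monic_aeval_mem_range {R S A : Type*} [CommRing R] [CommRing S]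
    [Nontrivial S] [Ring A] [Algebra R S] [Algebra S A] [Algebra R A] [IsScalarTower R S A]
    {p : R[X]} (hp : p.Monic) (hdeg : 0 < p.natDegree) {x : A}
    (h : aeval x p ∈ (algebraMap S A).range) : IsIntegral S x := by
  obtain ⟨s, hs⟩ := h
  refine ⟨p.map (algebraMap R S) - C s, (hp.map _).sub_of_left ?_, ?_⟩
  · refine degree_C_le.trans_lt ?_
    rw [hp.degree_map]
    exact_mod_cast natDegree_pos_iff_degree_pos.mp hdeg
  · rw [← aeval_def, map_sub, aeval_map_algebraMap, aeval_C, hs, sub_self]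

namespace IntSub

variable (E : Set (K D))

omit [IsDomain D] in
noncomputable instance : Algebra D (IntSub D E) :=
  ((algebraMap D (K D)[X]).codRestrict (IntSub D E) fun d _ _ => ⟨d, by simp⟩).toAlgebra

omit [IsDomain D] in
instance : IsScalarTower D (IntSub D E) (K D)[X] :=
  IsScalarTower.of_algebraMap_eq fun _ => rfl

omit [IsDomain D] in
theorem aeval_mem {f : (K D)[X]} {q : D[X]} (hq : ∀ a ∈ E, aeval (f.eval a) q = 0) :
    aeval f q ∈ IntSub D E := fun a ha =>
  ⟨0, by rw [map_zero, ← hq a ha]; exact (aeval_algHom_apply ((aeval a).restrictScalars D) f q).symm⟩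

end IntSub

theorem integralClosure_IntSub (E : Set (K D)) (hE : E.Finite) :
    (integralClosure (↥(IntSub D E)) (Polynomial (K D)) : Set (Polynomial (K D))) =
      {f : Polynomial (K D) | ∀ a ∈ E, IsIntegral D (f.eval a)} := by
  ext f
  refine ⟨fun hf a ha => ?_, fun hf => ?_⟩
  · refine IsIntegral.map_of_map_mem_range (evalRingHom a) (IsFractionRing.injective D (K D))
      (fun g => ?_) hf
    obtain ⟨d, hd⟩ := g.2 a ha
    exact ⟨d, hd.symm⟩
  · obtain ⟨q, hq, hqdeg, hqE⟩ := (hE.image (eval · f)).exists_monic_forall_aeval_eq_zero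
      (Set.forall_mem_image.mpr hf)
    exact IsIntegral.of_monic_aeval_mem_range hq hqdeg
      ⟨⟨_, IntSub.aeval_mem D E fun a ha => hqE _ ⟨a, ha, rfl⟩⟩, rfl⟩
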